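/- Let q be a prime power, let F_q be the finite field with q elements, and let s be a positive integer. Let P, Q ∈ F_q[X_1,...,X_m] be distinct polynomials of total degree at most d. Then the number of points a ∈ F_q^m at which P^{(i)}(a) = Q^{(i)}(a) for every vector i with wt(i) < s satisfies s·#{a ∈ F_q^m : P^{(<s)}(a) = Q^{(<s)}(a)} ≤ d·q^{m-1}. (Equivalently, the multiplicity code of order-s evaluations of degree-d polynomials in m variables over F_q has relative minimum distance at least 1 − d/(sq).) -/

import Mathlib

/-!
Multiplicity Schwartz–Zippel lemma (Dvir–Kopparty–Saraf–Sudan). If `P` and `Q` agree to order `s`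
at `a`, then every monomial of `R(X + a)`, where `R = P - Q ≠ 0`, has degree at least `s`, i.e.
`mult(R, a) ≥ s`. It therefore suffices to show `∑ₐ min(s, mult(R, a)) ≤ deg R ⬝ |S|^(n-1)` over a
grid `Sⁿ`, by induction on `n`. Write `R = ∑_{j ≤ t} Rⱼ(X') X₀ʲ` with `Rₜ ≠ 0`, and fix `a` and a
monomial `X'ᵉ` of least degree `w = mult(Rₜ, a)` in `Rₜ(X' + a)`. Its coefficient `g(X₀)` in
`R(X₀, X' + a)` is nonzero of degree at most `t`, and `X₀ᵘ X'ᵉ` with `u = mult(g, b)` occurs in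
`R(X + (b, a))`, so `mult(R, (b, a)) ≤ w + mult(g, b)`. As `∑_b mult(g, b) ≤ t`, this gives
`∑_{b ∈ S} min(s, mult(R, (b, a))) ≤ |S| min(s, w) + t`, and the induction hypothesis applies to
`Rₜ`, whose degree is at most `deg R - t`.
-/

/-- The Hasse derivative of a multivariate polynomial `P` with respect to the index
vector `i : Fin m → ℕ`: the coefficient of `Z^i` in `P(X + Z)`. -/
noncomputable def mvHasseDeriv {F : Type*} [CommSemiring F] {m : ℕ}
    (i : Fin m → ℕ) (P : MvPolynomial (Fin m) F) : MvPolynomial (Fin m) F :=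
  MvPolynomial.coeff (Finsupp.equivFunOnFinite.symm i)
    (MvPolynomial.eval₂ (MvPolynomial.C.comp MvPolynomial.C)
      (fun k => MvPolynomial.C (MvPolynomial.X k) + MvPolynomial.X k) P)

/-- The multiplicity of `P` at a point `a`: the largest `M` (possibly `⊤`) such that
all Hasse derivatives of `P` of weight `< M` vanish at `a`. -/
noncomputable def mvMult {F : Type*} [CommSemiring F] {m : ℕ}
    (P : MvPolynomial (Fin m) F) (a : Fin m → F) : ℕ∞ :=
  sSup {M : ℕ∞ | ∀ i : Fin m → ℕ, ((∑ k, i k : ℕ) : ℕ∞) < M →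
    MvPolynomial.eval a (mvHasseDeriv i P) = 0}

open MvPolynomial Finset

lemma Finset.sum_piFinset_succ {M : Type*} [AddCommMonoid M] {n : ℕ} {α : Fin (n + 1) → Type*}
    (S : ∀ i, Finset (α i)) (f : (∀ i, α i) → M) :
    ∑ x ∈ Fintype.piFinset S, f x =
      ∑ b ∈ S 0, ∑ x ∈ Fintype.piFinset (Fin.tail S), f (Fin.cons b x) := by
  have h := Finset.filter_piFinset_eq_map_consEquiv S fun _ => True
  simp only [Finset.filter_true] at h
  rw [h, Finset.sum_map, Finset.sum_product]
  rfl

lemma Finsupp.degree_cons {n : ℕ} (k : ℕ) (d : Fin n →₀ ℕ) :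
    (d.cons k).degree = k + d.degree := by
  simp [Finsupp.degree_eq_sum, Fin.sum_univ_succ]

namespace Polynomial

variable {R : Type*} [CommRing R]

lemma taylor_coeff_rootMultiplicity_ne_zero {g : R[X]} (hg : g ≠ 0) (b : R) :
    (taylor b g).coeff (g.rootMultiplicity b) ≠ 0 := by
  rw [rootMultiplicity_eq_natTrailingDegree, ← taylor_apply]
  exact trailingCoeff_nonzero_iff_nonzero.mpr (mt (taylor_eq_zero b g).mp hg)

lemma sum_rootMultiplicity_le_natDegree [IsDomain R] (g : R[X]) (S : Finset R) :
    ∑ b ∈ S, g.rootMultiplicity b ≤ g.natDegree := by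
  classical
  calc ∑ b ∈ S, g.rootMultiplicity b = ∑ b ∈ S, g.roots.count b := by simp [count_roots]
    _ ≤ ∑ b ∈ S ∪ g.roots.toFinset, g.roots.count b :=
      Finset.sum_le_sum_of_subset Finset.subset_union_left
    _ = Multiset.card g.roots := Multiset.sum_count_eq_card fun c hc =>
      Finset.mem_union_right _ (Multiset.mem_toFinset.mpr hc)
    _ ≤ g.natDegree := card_roots' g

end Polynomial

namespace MvPolynomial

variable {σ R : Type*} [CommRing R]

noncomputable def taylor (a : σ → R) : MvPolynomial σ R →ₐ[R] MvPolynomial σ R :=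
  aeval fun i => C (a i) + X i

@[simp] lemma taylor_X (a : σ → R) (i : σ) : taylor a (X i) = C (a i) + X i :=
  aeval_X _ _

lemma taylor_add (a b : σ → R) : taylor (a + b) = (taylor a).comp (taylor b) := by
  refine algHom_ext fun i => ?_
  simp only [taylor_X, AlgHom.comp_apply, map_add, algHom_C, algebraMap_eq, Pi.add_apply]
  ring

lemma taylor_zero : taylor (0 : σ → R) = AlgHom.id R _ :=
  algHom_ext fun i => by simp

lemma taylor_injective (a : σ → R) : Function.Injective (taylor a) := by
  refine Function.LeftInverse.injective (g := taylor (-a)) fun P => ?_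
  rw [← AlgHom.comp_apply, ← taylor_add, neg_add_cancel, taylor_zero, AlgHom.id_apply]

noncomputable def coeffPolynomial (d : σ →₀ ℕ) (p : Polynomial (MvPolynomial σ R)) :
    Polynomial R :=
  p.sum fun k c => Polynomial.monomial k (coeff d c)

@[simp] lemma coeff_coeffPolynomial (d : σ →₀ ℕ) (p : Polynomial (MvPolynomial σ R)) (k : ℕ) :
    (coeffPolynomial d p).coeff k = coeff d (p.coeff k) := by
  simp +contextual [coeffPolynomial, Polynomial.sum_def, Polynomial.coeff_monomial]

lemma natDegree_coeffPolynomial_le (d : σ →₀ ℕ) (p : Polynomial (MvPolynomial σ R)) :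
    (coeffPolynomial d p).natDegree ≤ p.natDegree :=
  Polynomial.natDegree_le_iff_coeff_eq_zero.mpr fun k hk => by
    rw [coeff_coeffPolynomial, Polynomial.coeff_eq_zero_of_natDegree_lt hk, coeff_zero]

lemma coeff_eval_C (d : σ →₀ ℕ) (b : R) (p : Polynomial (MvPolynomial σ R)) :
    coeff d (p.eval (C b)) = (coeffPolynomial d p).eval b := by
  have hlt := Nat.lt_succ_self p.natDegree
  rw [Polynomial.eval_eq_sum_range' hlt,
    Polynomial.eval_eq_sum_range' ((natDegree_coeffPolynomial_le d p).trans_lt hlt), coeff_sum]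
  refine Finset.sum_congr rfl fun j _ => ?_
  rw [← map_pow, mul_comm, coeff_C_mul, coeff_coeffPolynomial, mul_comm]

lemma coeffPolynomial_hasseDeriv (d : σ →₀ ℕ) (k : ℕ) (p : Polynomial (MvPolynomial σ R)) :
    coeffPolynomial d (Polynomial.hasseDeriv k p) =
      Polynomial.hasseDeriv k (coeffPolynomial d p) := by
  ext j
  simp only [coeff_coeffPolynomial, Polynomial.hasseDeriv_coeff, ← nsmul_eq_mul, coeff_smul]

lemma coeffPolynomial_taylor (d : σ →₀ ℕ) (b : R) (p : Polynomial (MvPolynomial σ R)) :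
    coeffPolynomial d (Polynomial.taylor (C b) p) = Polynomial.taylor b (coeffPolynomial d p) := by
  ext k
  rw [coeff_coeffPolynomial, Polynomial.taylor_coeff, Polynomial.taylor_coeff, coeff_eval_C,
    coeffPolynomial_hasseDeriv]

lemma finSuccEquiv_taylor_cons {n : ℕ} (b : R) (a : Fin n → R) (P : MvPolynomial (Fin (n + 1)) R) :
    finSuccEquiv R n (taylor (Fin.cons b a) P)
      = Polynomial.taylor (C b) ((finSuccEquiv R n P).map (taylor a)) := by
  induction P using MvPolynomial.induction_on with
  | C c => simp [finSuccEquiv_apply]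
  | add P Q hP hQ => simp only [map_add, Polynomial.map_add, hP, hQ]
  | mul_X P i hP =>
    have hX : finSuccEquiv R n (taylor (Fin.cons b a) (X i))
        = Polynomial.taylor (C b) ((finSuccEquiv R n (X i)).map (taylor a)) := by
      induction i using Fin.cases <;> simp [finSuccEquiv_apply, add_comm]
    rw [map_mul, map_mul, map_mul, Polynomial.map_mul, Polynomial.taylor_mul, hP, hX]

end MvPolynomial

section Multiplicity

variable {R : Type*} [CommRing R] {n : ℕ}

lemma eval_mvHasseDeriv (a : Fin n → R) (i : Fin n → ℕ) (P : MvPolynomial (Fin n) R) :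
    eval a (mvHasseDeriv i P) = coeff (Finsupp.equivFunOnFinite.symm i) (taylor a P) := by
  rw [mvHasseDeriv, ← coeff_map]
  congr 1
  change ((map (eval a)).comp (eval₂Hom (C.comp C) fun k => C (X k) + X k)) P = _
  congr 1
  ext <;> simp [taylor]

lemma mvMult_eq_order (P : MvPolynomial (Fin n) R) (a : Fin n → R) :
    mvMult P a = (taylor a P : MvPowerSeries (Fin n) R).order := by
  refine IsGreatest.csSup_eq ⟨fun i hi => ?_, fun M hM => MvPowerSeries.le_order fun d hd => ?_⟩
  · rw [eval_mvHasseDeriv, ← coeff_coe]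
    refine MvPowerSeries.coeff_of_lt_order ?_
    simpa [Finsupp.degree_eq_sum] using hi
  · rw [coeff_coe, ← Finsupp.equivFunOnFinite_symm_coe d, ← eval_mvHasseDeriv]
    exact hM d (by simpa [Finsupp.degree_eq_sum] using hd)

lemma mvMult_le_degree {P : MvPolynomial (Fin n) R} {a : Fin n → R} {d : Fin n →₀ ℕ}
    (hd : coeff d (taylor a P) ≠ 0) : mvMult P a ≤ d.degree := by
  rw [mvMult_eq_order]
  exact MvPowerSeries.order_le (by rwa [coeff_coe])

lemma exists_coeff_ne_zero_and_degree_eq_mvMult {P : MvPolynomial (Fin n) R}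
    (hP : P ≠ 0) (a : Fin n → R) :
    ∃ d : Fin n →₀ ℕ, coeff d (taylor a P) ≠ 0 ∧ d.degree = mvMult P a := by
  have hne : (taylor a P : MvPowerSeries (Fin n) R) ≠ 0 := by
    rw [Ne, coe_eq_zero_iff, ← map_zero (taylor a), (taylor_injective a).eq_iff]
    exact hP
  simpa only [mvMult_eq_order, coeff_coe] using
    MvPowerSeries.exists_coeff_ne_zero_and_order (MvPowerSeries.ne_zero_iff_order_finite.mp hne)

lemma le_mvMult_sub_of_eval_mvHasseDeriv_eq {P Q : MvPolynomial (Fin n) R} {a : Fin n → R}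
    {s : ℕ} (h : ∀ i : Fin n → ℕ, ∑ k, i k < s →
      eval a (mvHasseDeriv i P) = eval a (mvHasseDeriv i Q)) :
    (s : ℕ∞) ≤ mvMult (P - Q) a := by
  refine le_sSup fun i hi => ?_
  rw [eval_mvHasseDeriv, map_sub, coeff_sub, ← eval_mvHasseDeriv, ← eval_mvHasseDeriv,
    h i (by exact_mod_cast hi), sub_self]

lemma mvMult_cons_le_rootMultiplicity_add {P : MvPolynomial (Fin (n + 1)) R}
    (a : Fin n → R) (b : R) (d : Fin n →₀ ℕ)
    (hg : coeffPolynomial (R := R) d ((finSuccEquiv R n P).map (taylor a)) ≠ 0) :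
    mvMult P (Fin.cons b a) ≤
      ((coeffPolynomial (R := R) d ((finSuccEquiv R n P).map (taylor a))).rootMultiplicity b
        + d.degree : ℕ) := by
  set g := coeffPolynomial (R := R) d ((finSuccEquiv R n P).map (taylor a))
  have hcoeff : coeff (d.cons (g.rootMultiplicity b)) (taylor (Fin.cons b a) P) ≠ 0 := by
    rw [← finSuccEquiv_coeff_coeff, finSuccEquiv_taylor_cons, ← coeff_coeffPolynomial,
      coeffPolynomial_taylor]
    exact Polynomial.taylor_coeff_rootMultiplicity_ne_zero hg b
  simpa [Finsupp.degree_cons] using mvMult_le_degree hcoeff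

lemma sum_mvMult_cons_le [IsDomain R] {P : MvPolynomial (Fin (n + 1)) R} (hP : P ≠ 0)
    (S : Finset R) (a : Fin n → R) :
    ∑ b ∈ S, mvMult P (Fin.cons b a) ≤
      #S * mvMult (finSuccEquiv R n P).leadingCoeff a + (finSuccEquiv R n P).natDegree := by
  set p := finSuccEquiv R n P
  have hL : p.leadingCoeff ≠ 0 := by simpa [p] using hP
  obtain ⟨d, hd, hdeg⟩ := exists_coeff_ne_zero_and_degree_eq_mvMult hL a
  set g := coeffPolynomial (R := R) d (p.map (taylor a))
  have hg : g ≠ 0 := by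
    intro h
    apply hd
    simpa [g, Polynomial.coeff_map] using congrArg (Polynomial.coeff · p.natDegree) h
  have hroots : ∑ b ∈ S, g.rootMultiplicity b ≤ p.natDegree :=
    (Polynomial.sum_rootMultiplicity_le_natDegree g S).trans
      ((natDegree_coeffPolynomial_le d _).trans Polynomial.natDegree_map_le)
  calc ∑ b ∈ S, mvMult P (Fin.cons b a)
      ≤ ∑ b ∈ S, ((g.rootMultiplicity b + d.degree : ℕ) : ℕ∞) :=
        Finset.sum_le_sum fun b _ => mvMult_cons_le_rootMultiplicity_add a b d hg
    _ = #S * d.degree + ∑ b ∈ S, g.rootMultiplicity b := by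
        push_cast
        rw [Finset.sum_add_distrib, Finset.sum_const, nsmul_eq_mul, add_comm]
    _ ≤ #S * mvMult p.leadingCoeff a + p.natDegree := by
        rw [hdeg]
        gcongr

lemma sum_min_mvMult_cons_le [IsDomain R] {P : MvPolynomial (Fin (n + 1)) R} (hP : P ≠ 0)
    (S : Finset R) (a : Fin n → R) (s : ℕ) :
    ∑ b ∈ S, min (s : ℕ∞) (mvMult P (Fin.cons b a)) ≤
      #S * min (s : ℕ∞) (mvMult (finSuccEquiv R n P).leadingCoeff a)
        + (finSuccEquiv R n P).natDegree := by
  rcases le_total (s : ℕ∞) (mvMult (finSuccEquiv R n P).leadingCoeff a) with h | h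
  · calc ∑ b ∈ S, min (s : ℕ∞) (mvMult P (Fin.cons b a)) ≤ ∑ _b ∈ S, (s : ℕ∞) :=
          Finset.sum_le_sum fun _ _ => min_le_left _ _
      _ ≤ _ := by simp [min_eq_left h]
  · rw [min_eq_right h]
    exact (Finset.sum_le_sum fun _ _ => min_le_right _ _).trans (sum_mvMult_cons_le hP S a)

theorem sum_min_mvMult_le [IsDomain R] (S : Finset R) (s : ℕ) :
    ∀ {n : ℕ} {P : MvPolynomial (Fin n) R}, P ≠ 0 →
      ∑ a ∈ Fintype.piFinset fun _ => S, min (s : ℕ∞) (mvMult P a) ≤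
        (P.totalDegree * #S ^ (n - 1) : ℕ)
  | 0, P, hP => by
    have hzero (a : Fin 0 → R) : mvMult P a = 0 := by
      obtain ⟨d, -, hd⟩ := exists_coeff_ne_zero_and_degree_eq_mvMult hP a
      simp [← hd, Subsingleton.elim d 0]
    simp [hzero]
  | n + 1, P, hP => by
    set p := finSuccEquiv R n P
    set L := p.leadingCoeff
    have hL : L ≠ 0 := by simpa [L, p] using hP
    have hdeg : #S * (L.totalDegree * #S ^ (n - 1)) + #S ^ n * p.natDegree ≤
        P.totalDegree * #S ^ n := by
      have hcard : #S * (L.totalDegree * #S ^ (n - 1)) ≤ L.totalDegree * #S ^ n := by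
        rcases n with _ | n
        · rw [L.eq_C_of_isEmpty, totalDegree_C]
          simp
        · rw [mul_left_comm, ← pow_succ', Nat.add_sub_cancel]
      calc _ ≤ (L.totalDegree + p.natDegree) * #S ^ n := by
            rw [add_mul, mul_comm (#S ^ n)]
            gcongr
        _ ≤ P.totalDegree * #S ^ n := by
            gcongr
            exact totalDegree_coeff_finSuccEquiv_add_le P _ hL
    calc ∑ a ∈ Fintype.piFinset fun _ => S, min (s : ℕ∞) (mvMult P a)
        = ∑ a ∈ Fintype.piFinset fun _ => S, ∑ b ∈ S, min (s : ℕ∞) (mvMult P (Fin.cons b a)) := by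
          rw [Finset.sum_piFinset_succ, Finset.sum_comm]
          rfl
      _ ≤ ∑ a ∈ Fintype.piFinset fun _ => S, (#S * min (s : ℕ∞) (mvMult L a) + p.natDegree) :=
          Finset.sum_le_sum fun a _ => sum_min_mvMult_cons_le hP S a s
      _ = #S * ∑ a ∈ Fintype.piFinset fun _ => S, min (s : ℕ∞) (mvMult L a)
            + (#S ^ n * p.natDegree : ℕ) := by
          rw [Finset.sum_add_distrib, ← Finset.mul_sum, Finset.sum_const,
            Fintype.card_piFinset_const, nsmul_eq_mul]
          push_cast
          rfl
      _ ≤ (#S * (L.totalDegree * #S ^ (n - 1)) + #S ^ n * p.natDegree : ℕ) := by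
          push_cast
          gcongr
          exact_mod_cast sum_min_mvMult_le S s hL
      _ ≤ (P.totalDegree * #S ^ (n + 1 - 1) : ℕ) := by
          rw [Nat.add_sub_cancel]
          exact_mod_cast hdeg

end Multiplicity

theorem multiplicity_code_distance_general {F : Type*} [Field F] [Fintype F] {m : ℕ} (d s : ℕ)
    (P Q : MvPolynomial (Fin m) F) (hPQ : P ≠ Q)
    (hP : P.totalDegree ≤ d) (hQ : Q.totalDegree ≤ d) :
    s * Nat.card {a : Fin m → F // ∀ i : Fin m → ℕ, ∑ k, i k < s →
        MvPolynomial.eval a (mvHasseDeriv i P) = MvPolynomial.eval a (mvHasseDeriv i Q)}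
      ≤ d * Fintype.card F ^ (m - 1) := by
  classical
  have hdeg : (P - Q).totalDegree ≤ d := (totalDegree_sub P Q).trans (max_le hP hQ)
  have hSZ := sum_min_mvMult_le (univ : Finset F) s (sub_ne_zero.mpr hPQ)
  rw [Fintype.piFinset_univ] at hSZ
  rw [Nat.card_eq_fintype_card, Fintype.card_subtype]
  refine le_trans ?_ (Nat.mul_le_mul_right _ hdeg)
  rw [← Nat.cast_le (α := ℕ∞), mul_comm, Nat.cast_mul, ← nsmul_eq_mul]
  calc _ ≤ ∑ a ∈ univ with _, min (s : ℕ∞) (mvMult (P - Q) a) :=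
        card_nsmul_le_sum _ _ _ fun a ha =>
          le_min le_rfl (le_mvMult_sub_of_eval_mvHasseDeriv_eq (mem_filter.mp ha).2)
    _ ≤ ∑ a, min (s : ℕ∞) (mvMult (P - Q) a) := sum_le_sum_of_subset (filter_subset _ _)
    _ ≤ _ := hSZ

/-- **Distance of multiplicity codes.**
If `P ≠ Q` are `m`-variate polynomials of total degree at most `d` over the finite field `F_q`,
and `s > 0`, then `s ⬝ #{a ∈ F_q^m : P^{(<s)}(a) = Q^{(<s)}(a)} ≤ d ⬝ q^{m-1}`; equivalently, the
multiplicity code of order-`s` evaluations of degree-`d` polynomials has relative distance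
at least `1 − d/(sq)`. -/
theorem multiplicity_code_distance {F : Type*} [Field F] [Fintype F] {m : ℕ} (d s : ℕ)
    (hs : 0 < s) (P Q : MvPolynomial (Fin m) F) (hPQ : P ≠ Q)
    (hP : P.totalDegree ≤ d) (hQ : Q.totalDegree ≤ d) :
    s * Nat.card {a : Fin m → F // ∀ i : Fin m → ℕ, ∑ k, i k < s →
        MvPolynomial.eval a (mvHasseDeriv i P) = MvPolynomial.eval a (mvHasseDeriv i Q)}
      ≤ d * Fintype.card F ^ (m - 1) :=
  multiplicity_code_distance_general d s P Q hPQ hP hQ
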